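/- (Theorem 3, minimum value) Let 0 < r_1 < r_2 < r_3. For every configuration (α_1, α_2, α_3) the perimeter satisfies L ≥ 2(r_3 − r_1), and equality holds at the shortest parade α_1 = α_2 = α_3 = 0; thus the minimal connecting cycle has perimeter L_m = 2(r_3 − r_1). -/
import Mathlib


open Real

/-- Length of the chordal segment between points at radii `r`, `r'` whose polar angles
differ by `θ`. -/
noncomputable def ell (r r' θ : ℝ) : ℝ :=
  Real.sqrt (r ^ 2 + r' ^ 2 - 2 * r * r' * Real.cos θ)

/-- The perimeter `L = |p₁ − p₂| + |p₂ − p₃| + |p₃ − p₁|` of the connecting cycle for three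
concentric circles of radii `r1, r2, r3` with vertices at polar angles `a1, a2, a3`. -/
noncomputable def L3full (r1 r2 r3 a1 a2 a3 : ℝ) : ℝ :=
  ell r1 r2 (a2 - a1) + ell r2 r3 (a3 - a2) + ell r3 r1 (a1 - a3)

lemma ell_ge (r r' θ : ℝ) (hr : 0 ≤ r) (hr' : 0 ≤ r') : |r - r'| ≤ ell r r' θ := by
  have h := Real.cos_le_one θ
  have : (r - r') ^ 2 ≤ r ^ 2 + r' ^ 2 - 2 * r * r' * Real.cos θ := by
    nlinarith [mul_nonneg hr hr']
  calc |r - r'| = Real.sqrt ((r - r') ^ 2) := (Real.sqrt_sq_eq_abs _).symm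
    _ ≤ ell r r' θ := Real.sqrt_le_sqrt this

lemma ell_zero (r r' : ℝ) (h : r ≤ r') : ell r r' 0 = r' - r := by
  unfold ell
  rw [Real.cos_zero]
  have : r ^ 2 + r' ^ 2 - 2 * r * r' * 1 = (r' - r) ^ 2 := by ring
  rw [this, Real.sqrt_sq (by linarith)]

/-- Theorem 3, minimum value: for `0 < r1 < r2 < r3` the perimeter of any
connecting cycle is at least `2(r3 − r1)`, with equality at the shortest parade
`α₁ = α₂ = α₃ = 0`. -/
theorem stmt_10 (r1 r2 r3 : ℝ) (h1 : 0 < r1) (h12 : r1 < r2) (h23 : r2 < r3) :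
    (∀ a1 a2 a3 : ℝ, 2 * (r3 - r1) ≤ L3full r1 r2 r3 a1 a2 a3) ∧
    L3full r1 r2 r3 0 0 0 = 2 * (r3 - r1) := by
  constructor
  · intro a1 a2 a3
    have e1 := ell_ge r1 r2 (a2 - a1) (by linarith) (by linarith)
    have e2 := ell_ge r2 r3 (a3 - a2) (by linarith) (by linarith)
    have e3 := ell_ge r3 r1 (a1 - a3) (by linarith) (by linarith)
    rw [abs_of_nonpos (by linarith)] at e1
    rw [abs_of_nonpos (by linarith)] at e2
    rw [abs_of_nonneg (by linarith)] at e3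
    unfold L3full
    linarith
  · unfold L3full
    have h31 : ell r3 r1 (0 - 0) = r3 - r1 := by
      unfold ell
      rw [show (0:ℝ)-0=0 by ring, Real.cos_zero]
      have : r3 ^ 2 + r1 ^ 2 - 2 * r3 * r1 * 1 = (r3 - r1) ^ 2 := by ring
      rw [this, Real.sqrt_sq (by linarith)]
    rw [show (0:ℝ) - 0 = 0 by ring] at h31 ⊢
    rw [ell_zero r1 r2 (le_of_lt h12), ell_zero r2 r3 (le_of_lt h23), h31]
    ring
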